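/- arXiv:1810.03086 — 3 statements merged into one kernel-verified Lean document; each statement's English description precedes it below -/
import Mathlib

section
/- Let D and D̃ be derivations of 𝔞 such that B is both D-invariant and D̃-invariant, and let 𝔤 and 𝔤̃ be the double extensions of (𝔞, B) by D and by D̃ on K × 𝔞 × K, with brackets ⁅·,·⁆_𝔤 and ⁅·,·⁆_𝔤̃. Suppose π₀ : 𝔞 → 𝔞 is a bijective Lie algebra homomorphism with B (π₀ a) (π₀ b) = B a b for all a,b; λ ∈ K with λ ≠ 0; and κ ∈ 𝔞 satisfies π₀⁻¹ ∘ D̃ ∘ π₀ = λ • D + ad κ (as linear maps 𝔞 → 𝔞, where ad κ is b ↦ ⁅κ,b⁆). Set ρ := (2 : K)⁻¹ • B κ κ and define π : K × 𝔞 × K → K × 𝔞 × K by π (u,a,v) := (λ·u + B κ a − λ⁻¹·ρ·v, π₀ a − (λ⁻¹·v) • π₀ κ, λ⁻¹·v). Then π is a bijective K-linear map, π ⁅f,g⁆_𝔤 = ⁅π f, π g⁆_𝔤̃ for all f,g, B_𝔤̃ (π f) (π g) = B_𝔤 f g for all f,g (where B_𝔤 (u,a,v) (u',a',v') := B a a'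 + u·v' + u'·v and likewise B_𝔤̃), and π maps the subspace K × 𝔞 × {0} onto K × 𝔞 × {0}. -/
/-!
`π` is the composite of three isometric isomorphisms of double extensions: the rescaling
`(u, a, v) ↦ (λ u, a, λ⁻¹ v)` from the extension by `D` to the one by `λ • D`; the shear
`(u, a, v) ↦ (u + B κ a - ρ v, a - v • κ, v)` from the extension by a `B`-skew `E` to the one by
`E + ad κ`, which works because `B (E κ) κ = 0` and `B ⁅κ, a⁆ κ = 0`, while `2 ρ = B κ κ` makes it
isometric; and `id × π₀ × id`, from the extension by `λ • D + ad κ` to the one by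
`π₀ ∘ (λ • D + ad κ) ∘ π₀⁻¹ = D̃`. The last coordinate is only ever multiplied by `λ⁻¹`, so
`K × 𝔞 × {0}` is preserved.
-/

/-- The bracket of the double extension of `(𝔞, B)` by the derivation `E`
on the space `K × 𝔞 × K`. -/
def doubleExtBracket {K : Type*} [Field K] {L : Type*} [LieRing L] [LieAlgebra K L]
    (B : L →ₗ[K] L →ₗ[K] K) (E : L →ₗ[K] L) (f g : K × L × K) : K × L × K :=
  (B (E f.2.1) g.2.1, ⁅f.2.1, g.2.1⁆ + f.2.2 • E g.2.1 - g.2.2 • E f.2.1, (0 : K))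

/-- The natural bilinear form on the double extension. -/
def doubleExtForm {K : Type*} [Field K] {L : Type*} [LieRing L] [LieAlgebra K L]
    (B : L →ₗ[K] L →ₗ[K] K) (f g : K × L × K) : K :=
  B f.2.1 g.2.1 + f.1 * g.2.2 + g.1 * f.2.2

theorem Equiv.image_setOf_eq_of_iff {α : Type*} (e : α ≃ α) {p : α → Prop}
    (h : ∀ x, p (e x) ↔ p x) : e '' {x | p x} = {x | p x} := by
  ext y
  simp only [e.image_eq_preimage_symm, Set.mem_preimage, Set.mem_ofPred_eq]
  rw [← h, e.apply_symm_apply]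

namespace DoubleExt

variable {K : Type*} [Field K] {L : Type*} [LieRing L] [LieAlgebra K L]
  (B : L →ₗ[K] L →ₗ[K] K)

section Scale

variable (lam : K) (hlam : lam ≠ 0)

def scale : (K × L × K) ≃ₗ[K] K × L × K :=
  (LinearEquiv.smulOfNeZero K K lam hlam).prodCongr
    ((LinearEquiv.refl K L).prodCongr (LinearEquiv.smulOfNeZero K K lam⁻¹ (inv_ne_zero hlam)))

@[simp]
theorem scale_apply (f : K × L × K) :
    scale lam hlam f = (lam * f.1, f.2.1, lam⁻¹ * f.2.2) := rfl

theorem scale_doubleExtBracket (E : L →ₗ[K] L) (f g : K × L × K) :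
    scale lam hlam (doubleExtBracket B E f g) =
      doubleExtBracket B (lam • E) (scale lam hlam f) (scale lam hlam g) := by
  have hcancel (x : K) : lam⁻¹ * x * lam = x := by field_simp
  simp only [doubleExtBracket, scale_apply, LinearMap.smul_apply, map_smul, smul_eq_mul,
    smul_smul, hcancel, mul_zero]

theorem doubleExtForm_scale (f g : K × L × K) :
    doubleExtForm B (scale lam hlam f) (scale lam hlam g) = doubleExtForm B f g := by
  simp only [doubleExtForm, scale_apply]
  field_simp

end Scale

section Shear

variable {B}

theorem apply_lie_self_eq_zero (hsym : ∀ a b : L, B a b = B b a)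
    (hinv : ∀ a b c : L, B ⁅a, b⁆ c = B a ⁅b, c⁆) (κ a : L) : B ⁅κ, a⁆ κ = 0 := by
  rw [hinv, hsym, hinv, lie_self, map_zero]

theorem apply_self_eq_zero_of_skew (hchar : (2 : K) ≠ 0) (hsym : ∀ a b : L, B a b = B b a)
    {E : L →ₗ[K] L} (hE : ∀ a b : L, B (E a) b + B a (E b) = 0) (κ : L) : B (E κ) κ = 0 := by
  have h := hE κ κ
  rw [hsym κ, ← two_mul] at h
  exact (mul_eq_zero.mp h).resolve_left hchar

variable (B)

def shear (κ : L) : (K × L × K) ≃ₗ[K] K × L × K where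
  toFun f := (f.1 + B κ f.2.1 - 2⁻¹ * B κ κ * f.2.2, f.2.1 - f.2.2 • κ, f.2.2)
  invFun g := (g.1 - B κ (g.2.1 + g.2.2 • κ) + 2⁻¹ * B κ κ * g.2.2, g.2.1 + g.2.2 • κ, g.2.2)
  map_add' f g := by
    ext
    · simp only [Prod.fst_add, Prod.snd_add, map_add]
      ring
    · simp only [Prod.snd_add, Prod.fst_add, add_smul]
      abel
    · rfl
  map_smul' c f := by
    ext
    · simp only [Prod.smul_fst, Prod.smul_snd, map_smul, smul_eq_mul, RingHom.id_apply]
      ring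
    · simp only [Prod.smul_fst, Prod.smul_snd, smul_sub, smul_smul, smul_eq_mul, RingHom.id_apply]
    · rfl
  left_inv f := by
    ext
    · simp only [sub_add_cancel]
      ring
    · exact sub_add_cancel _ _
    · rfl
  right_inv g := by
    ext
    · simp only [map_add, map_smul, smul_eq_mul]
      ring
    · exact add_sub_cancel_right _ _
    · rfl

@[simp]
theorem shear_apply (κ : L) (f : K × L × K) :
    shear B κ f = (f.1 + B κ f.2.1 - 2⁻¹ * B κ κ * f.2.2, f.2.1 - f.2.2 • κ, f.2.2) := rfl

variable {B}

theorem shear_doubleExtBracket (hchar : (2 : K) ≠ 0) (hsym : ∀ a b : L, B a b = B b a)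
    (hinv : ∀ a b c : L, B ⁅a, b⁆ c = B a ⁅b, c⁆) {E : L →ₗ[K] L}
    (hE : ∀ a b : L, B (E a) b + B a (E b) = 0) (κ : L) (f g : K × L × K) :
    shear B κ (doubleExtBracket B E f g) =
      doubleExtBracket B (E + LieAlgebra.ad K L κ) (shear B κ f) (shear B κ g) := by
  obtain ⟨u, a, v⟩ := f
  obtain ⟨u', a', v'⟩ := g
  ext
  · simp only [doubleExtBracket, shear_apply, LinearMap.add_apply, LieAlgebra.ad_apply, map_add,
      map_sub, map_smul, lie_self, map_zero, sub_zero, LinearMap.sub_apply, LinearMap.smul_apply,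
      LinearMap.zero_apply, smul_eq_mul, mul_zero, apply_lie_self_eq_zero hsym hinv,
      apply_self_eq_zero_of_skew hchar hsym hE]
    linear_combination (hinv κ a a').symm + v * hE κ a' + v' * hsym (E a) κ
  · simp only [doubleExtBracket, shear_apply, LinearMap.add_apply, LieAlgebra.ad_apply, map_sub,
      map_smul, lie_sub, sub_lie, lie_smul, smul_lie, lie_self, smul_zero, sub_zero, smul_sub,
      smul_add, smul_smul]
    rw [← lie_skew κ a]
    module
  · simp only [doubleExtBracket, shear_apply]

theorem doubleExtForm_shear (hchar : (2 : K) ≠ 0) (hsym : ∀ a b : L, B a b = B b a)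
    (κ : L) (f g : K × L × K) :
    doubleExtForm B (shear B κ f) (shear B κ g) = doubleExtForm B f g := by
  simp only [doubleExtForm, shear_apply, map_sub, map_smul, LinearMap.sub_apply,
    LinearMap.smul_apply, smul_eq_mul]
  linear_combination -(hsym f.2.1 κ) * g.2.2 - f.2.2 * g.2.2 * B κ κ * (mul_inv_cancel₀ hchar)

end Shear

section Transport

variable (φ : L ≃ₗ[K] L)

def transport : (K × L × K) ≃ₗ[K] K × L × K :=
  (LinearEquiv.refl K K).prodCongr (φ.prodCongr (LinearEquiv.refl K K))

@[simp]
theorem transport_apply (f : K × L × K) : transport φ f = (f.1, φ f.2.1, f.2.2) := rfl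

variable {B φ}

theorem transport_doubleExtBracket (hφbr : ∀ a b : L, φ ⁅a, b⁆ = ⁅φ a, φ b⁆)
    (hφB : ∀ a b : L, B (φ a) (φ b) = B a b) {E E' : L →ₗ[K] L}
    (hE : ∀ a : L, E' (φ a) = φ (E a)) (f g : K × L × K) :
    transport φ (doubleExtBracket B E f g) =
      doubleExtBracket B E' (transport φ f) (transport φ g) := by
  simp only [doubleExtBracket, transport_apply, hE, hφB, map_sub, map_add, map_smul, hφbr]

theorem doubleExtForm_transport (hφB : ∀ a b : L, B (φ a) (φ b) = B a b) (f g : K × L × K) :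
    doubleExtForm B (transport φ f) (transport φ g) = doubleExtForm B f g := by
  simp only [doubleExtForm, transport_apply, hφB]

end Transport

end DoubleExt

open DoubleExt in
theorem adapted_isomorphism_of_cohomologous_derivations_general
    {K : Type*} [Field K] (hchar : (2 : K) ≠ 0)
    {L : Type*} [LieRing L] [LieAlgebra K L]
    (B : L →ₗ[K] L →ₗ[K] K)
    (hsym : ∀ a b : L, B a b = B b a)
    (hinv : ∀ a b c : L, B ⁅a, b⁆ c = B a ⁅b, c⁆)
    (D Dt : L →ₗ[K] L)
    (hDinv : ∀ a b : L, B (D a) b + B a (D b) = 0)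
    (π₀ : L ≃ₗ[K] L)
    (hπ₀br : ∀ a b : L, π₀ ⁅a, b⁆ = ⁅π₀ a, π₀ b⁆)
    (hπ₀B : ∀ a b : L, B (π₀ a) (π₀ b) = B a b)
    (lam : K) (hlam : lam ≠ 0) (κ : L)
    (hcob : ∀ b : L, π₀.symm (Dt (π₀ b)) = lam • D b + ⁅κ, b⁆) :
    ∃ π : K × L × K → K × L × K,
      (∀ (u v : K) (a : L),
        π (u, a, v) = (lam * u + B κ a - lam⁻¹ * ((2 : K)⁻¹ * B κ κ) * v,
          π₀ a - (lam⁻¹ * v) • π₀ κ, lam⁻¹ * v)) ∧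
      Function.Bijective π ∧
      (∀ (c : K) (f g : K × L × K), π (c • f + g) = c • π f + π g) ∧
      (∀ f g : K × L × K,
        π (doubleExtBracket B D f g) = doubleExtBracket B Dt (π f) (π g)) ∧
      (∀ f g : K × L × K, doubleExtForm B (π f) (π g) = doubleExtForm B f g) ∧
      π '' {f : K × L × K | f.2.2 = 0} = {f : K × L × K | f.2.2 = 0} := by
  set π := (scale lam hlam).trans ((shear B κ).trans (transport π₀)) with hπ
  have hDt (b : L) : Dt (π₀ b) = π₀ ((lam • D + LieAlgebra.ad K L κ) b) := by
    rw [← π₀.apply_symm_apply (Dt _), hcob]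
    rfl
  have hlamD (a b : L) : B ((lam • D) a) b + B a ((lam • D) b) = 0 := by
    simp only [LinearMap.smul_apply, map_smul, smul_eq_mul, ← mul_add, hDinv, mul_zero]
  refine ⟨π, fun u v a => ?_, π.bijective, fun c f g => by simp only [map_add, map_smul],
    fun f g => ?_, fun f g => ?_, ?_⟩
  · simp only [hπ, LinearEquiv.trans_apply, scale_apply, shear_apply, transport_apply, map_sub,
      map_smul]
    congr 1
    ring
  · simp only [hπ, LinearEquiv.trans_apply, scale_doubleExtBracket,
      shear_doubleExtBracket hchar hsym hinv hlamD, transport_doubleExtBracket hπ₀br hπ₀B hDt]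
  · simp only [hπ, LinearEquiv.trans_apply, doubleExtForm_transport hπ₀B,
      doubleExtForm_shear hchar hsym, doubleExtForm_scale]
  · refine Equiv.image_setOf_eq_of_iff π.toEquiv fun f => ?_
    exact mul_eq_zero_iff_left (inv_ne_zero hlam)

theorem adapted_isomorphism_of_cohomologous_derivations
    {K : Type*} [Field K] (hchar : (2 : K) ≠ 0)
    {L : Type*} [LieRing L] [LieAlgebra K L]
    (B : L →ₗ[K] L →ₗ[K] K)
    (hsym : ∀ a b : L, B a b = B b a)
    (hinv : ∀ a b c : L, B ⁅a, b⁆ c = B a ⁅b, c⁆)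
    (hnd : ∀ a : L, (∀ b : L, B a b = 0) → a = 0)
    (D Dt : L →ₗ[K] L)
    (hder : ∀ a b : L, D ⁅a, b⁆ = ⁅D a, b⁆ + ⁅a, D b⁆)
    (hdert : ∀ a b : L, Dt ⁅a, b⁆ = ⁅Dt a, b⁆ + ⁅a, Dt b⁆)
    (hDinv : ∀ a b : L, B (D a) b + B a (D b) = 0)
    (hDtinv : ∀ a b : L, B (Dt a) b + B a (Dt b) = 0)
    (π₀ : L ≃ₗ[K] L)
    (hπ₀br : ∀ a b : L, π₀ ⁅a, b⁆ = ⁅π₀ a, π₀ b⁆)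
    (hπ₀B : ∀ a b : L, B (π₀ a) (π₀ b) = B a b)
    (lam : K) (hlam : lam ≠ 0) (κ : L)
    (hcob : ∀ b : L, π₀.symm (Dt (π₀ b)) = lam • D b + ⁅κ, b⁆) :
    ∃ π : K × L × K → K × L × K,
      (∀ (u v : K) (a : L),
        π (u, a, v) = (lam * u + B κ a - lam⁻¹ * ((2 : K)⁻¹ * B κ κ) * v,
          π₀ a - (lam⁻¹ * v) • π₀ κ, lam⁻¹ * v)) ∧
      Function.Bijective π ∧
      (∀ (c : K) (f g : K × L × K), π (c • f + g) = c • π f + π g) ∧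
      (∀ f g : K × L × K,
        π (doubleExtBracket B D f g) = doubleExtBracket B Dt (π f) (π g)) ∧
      (∀ f g : K × L × K, doubleExtForm B (π f) (π g) = doubleExtForm B f g) ∧
      π '' {f : K × L × K | f.2.2 = 0} = {f : K × L × K | f.2.2 = 0} :=
  adapted_isomorphism_of_cohomologous_derivations_general hchar B hsym hinv D Dt hDinv π₀ hπ₀br hπ₀B
    lam hlam κ hcob
end

section
/- Let D and D̃ be derivations of 𝔞 such that B is both D-invariant and D̃-invariant, and let 𝔤 and 𝔤̃ be the double extensions of (𝔞, B) by D and by D̃ on K × 𝔞 × K. Suppose π : K × 𝔞 × K → K × 𝔞 × K is a bijective K-linear map such that π ⁅f,g⁆_𝔤 = ⁅π f, π g⁆_𝔤̃ for all f,g, B_𝔤̃ (π f) (π g) = B_𝔤 f g for all f,g (where B_𝔤 (u,a,v) (u',a',v') := B a a' + u·v' + u'·v and likewise B_𝔤̃), and π maps the subspace K × 𝔞 × {0} onto K × 𝔞 × {0}. Then there exist a unique bijective Lie algebra homomorphism π₀ : 𝔞 → 𝔞 with B (π₀ a) (π₀ b) = B a b for all a,b, a unique λ ∈ K with λ ≠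 0, and a unique κ ∈ 𝔞, such that π₀⁻¹ ∘ D̃ ∘ π₀ = λ • D + ad κ (as linear maps 𝔞 → 𝔞) and π (u,a,v) = (λ·u + B κ a − λ⁻¹·ρ·v, π₀ a − (λ⁻¹·v) • π₀ κ, λ⁻¹·v) for all (u,a,v), where ρ := (2 : K)⁻¹ • B κ κ. -/
/-!
An isometry `π` preserving `W = K × 𝔞 × 0` also preserves `W^⊥ = K × 0 × 0`, so it is block
upper triangular: `π (u, a, v) = (s u + φ a + α v, e a + v c, t v)`. Preservation of the form
gives `s t = 1`, makes `e` an isometry of `B` (hence bijective, using adaptedness for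
surjectivity), and determines `φ` and `α` through `κ := -s e⁻¹ c`. Preservation of the bracket
on `𝔞` and on pairs `(0, 0, 1), (0, b, 0)` makes `e` a Lie algebra map and yields the
conjugation relation. Conversely the formula recovers `e`, `s` and `κ` from `π`.
-/

theorem isLinearMap_of_map_smul_add {R M N : Type*} [Semiring R] [AddCommMonoid M]
    [AddCommGroup N] [Module R M] [Module R N] {f : M → N}
    (h : ∀ (c : R) (x y : M), f (c • x + y) = c • f x + f y) : IsLinearMap R f := by
  have map_add (x y : M) : f (x + y) = f x + f y := by simpa using h 1 x y
  have map_zero : f 0 = 0 := by simpa using map_add 0 0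
  exact ⟨map_add, fun c x => by simpa [map_zero] using h c x 0⟩

section

variable {K : Type*} [Field K] {L : Type*} [LieRing L] [LieAlgebra K L] {B : L →ₗ[K] L →ₗ[K] K}

theorem eq_of_forall_doubleExtForm_eq_zero (hnd : B.SeparatingLeft) {f : K × L × K}
    (h : ∀ g : K × L × K, g.2.2 = 0 → doubleExtForm B f g = 0) : f = (f.1, 0, 0) := by
  have hmid : f.2.1 = 0 := hnd _ fun b => by simpa [doubleExtForm] using h (0, b, 0) rfl
  have hlast : f.2.2 = 0 := by simpa [doubleExtForm] using h (1, 0, 0) rfl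
  exact Prod.ext rfl (Prod.ext hmid hlast)

/-- The shape of a linear endomorphism of `K × 𝔞 × K` preserving the flag
`K × 0 × 0 ⊆ K × 𝔞 × 0 ⊆ K × 𝔞 × K`. -/
def triangularMap (s : K) (φ : L →ₗ[K] K) (α : K) (e : L →ₗ[K] L) (c : L) (t : K)
    (f : K × L × K) : K × L × K :=
  (s * f.1 + φ f.2.1 + α * f.2.2, e f.2.1 + f.2.2 • c, t * f.2.2)

theorem exists_eq_triangularMap (hnd : B.SeparatingLeft) {π : K × L × K → K × L × K}
    (hlin : IsLinearMap K π)
    (hB : ∀ f g : K × L × K, doubleExtForm B (π f) (π g) = doubleExtForm B f g)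
    (hadapt : π '' {f : K × L × K | f.2.2 = 0} = {f : K × L × K | f.2.2 = 0}) :
    ∃ (s : K) (φ : L →ₗ[K] K) (α : K) (e : L →ₗ[K] L) (c : L) (t : K),
      π = triangularMap s φ α e c t := by
  let P : K × L × K →ₗ[K] K × L × K := IsLinearMap.mk' π hlin
  have hW (f : K × L × K) (hf : f.2.2 = 0) : (π f).2.2 = 0 := by
    have : π f ∈ π '' {f : K × L × K | f.2.2 = 0} := ⟨f, hf, rfl⟩
    rwa [hadapt] at this
  have hinl : π (1, 0, 0) = ((π (1, 0, 0)).1, 0, 0) := by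
    refine eq_of_forall_doubleExtForm_eq_zero hnd fun g hg => ?_
    obtain ⟨f, hf, rfl⟩ : g ∈ π '' {f : K × L × K | f.2.2 = 0} := by rwa [hadapt]
    rw [hB]
    simp [doubleExtForm, show f.2.2 = 0 from hf]
  let ι : L →ₗ[K] K × L × K := LinearMap.inr K K (L × K) ∘ₗ LinearMap.inl K L K
  let φ : L →ₗ[K] K := LinearMap.fst K K (L × K) ∘ₗ P ∘ₗ ι
  let e : L →ₗ[K] L := LinearMap.fst K L K ∘ₗ LinearMap.snd K K (L × K) ∘ₗ P ∘ₗ ι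
  refine ⟨(π (1, 0, 0)).1, φ, (π (0, 0, 1)).1, e, (π (0, 0, 1)).2.1,
    (π (0, 0, 1)).2.2, funext fun ⟨u, a, v⟩ => ?_⟩
  have hdecomp : ((u, a, v) : K × L × K) = u • (1, 0, 0) + ((0, a, 0) + v • (0, 0, 1)) := by
    simp
  have hmid : π (0, a, 0) = (φ a, e a, 0) := Prod.ext rfl (Prod.ext rfl (hW _ rfl))
  change P (u, a, v) = _
  rw [hdecomp, map_add, map_add, map_smul, map_smul]
  change u • π (1, 0, 0) + (π (0, a, 0) + v • π (0, 0, 1)) = _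
  rw [hinl, hmid]
  refine Prod.ext ?_ (Prod.ext ?_ ?_) <;>
    simp only [triangularMap, Prod.smul_mk, Prod.mk_add_mk, Prod.fst_add, Prod.snd_add,
      Prod.smul_fst, Prod.smul_snd, smul_eq_mul, mul_zero, mul_one, smul_zero, add_zero,
      zero_add] <;>
    ring

/-- The explicit form of an adapted isometry in terms of `π₀ = e`, `λ = s` and `κ`. -/
def adaptedMap (B : L →ₗ[K] L →ₗ[K] K) (e : L → L) (s : K) (κ : L) (f : K × L × K) :
    K × L × K :=
  (s * f.1 + B κ f.2.1 - s⁻¹ * ((2 : K)⁻¹ * B κ κ) * f.2.2, e f.2.1 - (s⁻¹ * f.2.2) • e κ,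
    s⁻¹ * f.2.2)

theorem eq_of_adaptedMap_eq {e e' : L → L} {s s' : K} {κ κ' : L} (he : Function.Injective e)
    (hs : s ≠ 0) (h : adaptedMap B e s κ = adaptedMap B e' s' κ') :
    e = e' ∧ s = s' ∧ κ = κ' := by
  have hee' : e = e' := funext fun a => by
    simpa [adaptedMap] using congrArg (·.2.1) (congrFun h (0, a, 0))
  have hss' : s = s' := inv_injective <| by
    simpa [adaptedMap] using congrArg (·.2.2) (congrFun h (0, 0, 1))
  subst hee' hss'
  refine ⟨rfl, rfl, he ?_⟩
  simpa [adaptedMap, hs] using congrArg (·.2.1) (congrFun h (0, 0, 1))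

namespace triangularMap

variable {s : K} {φ : L →ₗ[K] K} {α : K} {e : L →ₗ[K] L} {c : L} {t : K}

theorem surjective
    (hadapt : triangularMap s φ α e c t '' {f : K × L × K | f.2.2 = 0} =
      {f : K × L × K | f.2.2 = 0}) :
    Function.Surjective e := fun b => by
  obtain ⟨f, hf, hfb⟩ :
      ((0, b, 0) : K × L × K) ∈ triangularMap s φ α e c t '' {f | f.2.2 = 0} := by
    rw [hadapt]; rfl
  refine ⟨f.2.1, ?_⟩
  simpa [triangularMap, show f.2.2 = 0 from hf] using congrArg (·.2.1) hfb

section Isometry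

variable (hB : ∀ f g : K × L × K, doubleExtForm B (triangularMap s φ α e c t f)
  (triangularMap s φ α e c t g) = doubleExtForm B f g)
include hB

theorem mul_eq_one : s * t = 1 := by
  simpa [triangularMap, doubleExtForm] using hB (1, 0, 0) (0, 0, 1)

theorem form_middle (a b : L) : B (e a) (e b) = B a b := by
  simpa [triangularMap, doubleExtForm] using hB (0, a, 0) (0, b, 0)

theorem form_shift_middle (a : L) : B c (e a) + φ a * t = 0 := by
  simpa [triangularMap, doubleExtForm] using hB (0, 0, 1) (0, a, 0)

theorem form_shift_shift : B c c + 2 * (α * t) = 0 := by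
  have h := hB (0, 0, 1) (0, 0, 1)
  simp only [doubleExtForm, triangularMap, mul_zero, map_zero, add_zero, mul_one, zero_add,
    one_smul] at h
  linear_combination h

theorem injective (hnd : B.SeparatingLeft) : Function.Injective e :=
  (injective_iff_map_eq_zero e).2 fun a ha =>
    hnd a fun b => by rw [← form_middle hB a b, ha, map_zero, LinearMap.zero_apply]

theorem eq_adaptedMap (hchar : (2 : K) ≠ 0) {κ : L} (hκ : e κ = -(s • c)) :
    triangularMap s φ α e c t = adaptedMap B e s κ := by
  have hst := mul_eq_one hB
  have hs : s ≠ 0 := left_ne_zero_of_mul_eq_one hst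
  have ht : t = s⁻¹ := eq_inv_of_mul_eq_one_right hst
  have hκa (a : L) : B κ a = φ a := by
    rw [← form_middle hB κ a, hκ]
    simp only [map_neg, map_smul, LinearMap.neg_apply, LinearMap.smul_apply, smul_eq_mul]
    linear_combination (-s) * form_shift_middle hB a + φ a * hst
  have hκκ : B κ κ = -(2 * (s * α)) := by
    rw [← form_middle hB κ κ, hκ]
    simp only [map_neg, map_smul, LinearMap.neg_apply, LinearMap.smul_apply, smul_eq_mul]
    linear_combination s ^ 2 * form_shift_shift hB - 2 * s * α * hst
  funext ⟨u, a, v⟩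
  refine Prod.ext ?_ (Prod.ext ?_ ?_)
  · simp only [triangularMap, adaptedMap]
    rw [hκκ, hκa]
    field_simp
    ring
  · simp only [triangularMap, adaptedMap, hκ, smul_neg, smul_smul, sub_neg_eq_add]
    congr 2
    field_simp
  · simp [triangularMap, adaptedMap, ht]

end Isometry

section Bracket

variable {D Dt : L →ₗ[K] L} (hbr : ∀ f g : K × L × K,
  triangularMap s φ α e c t (doubleExtBracket B D f g) =
    doubleExtBracket B Dt (triangularMap s φ α e c t f) (triangularMap s φ α e c t g))
include hbr

theorem map_lie (a b : L) : e ⁅a, b⁆ = ⁅e a, e b⁆ := by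
  simpa [triangularMap, doubleExtBracket] using congrArg (·.2.1) (hbr (0, a, 0) (0, b, 0))

theorem map_derivation (b : L) : e (D b) = ⁅c, e b⁆ + t • Dt (e b) := by
  simpa [triangularMap, doubleExtBracket] using congrArg (·.2.1) (hbr (0, 0, 1) (0, b, 0))

theorem map_conj (hst : s * t = 1) {κ : L} (hκ : e κ = -(s • c)) (b : L) :
    Dt (e b) = e (s • D b + ⁅κ, b⁆) := by
  rw [map_add, map_smul, map_lie hbr, map_derivation hbr, hκ, smul_add, smul_smul,
    hst, one_smul, neg_lie, smul_lie]
  abel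

end Bracket

end triangularMap

end

theorem data_of_adapted_isomorphism_general
    {K : Type*} [Field K] (hchar : (2 : K) ≠ 0)
    {L : Type*} [LieRing L] [LieAlgebra K L]
    (B : L →ₗ[K] L →ₗ[K] K)
    (hnd : ∀ a : L, (∀ b : L, B a b = 0) → a = 0)
    (D Dt : L →ₗ[K] L)
    (π : K × L × K → K × L × K)
    (hlin : ∀ (c : K) (f g : K × L × K), π (c • f + g) = c • π f + π g)
    (hbr : ∀ f g : K × L × K,
      π (doubleExtBracket B D f g) = doubleExtBracket B Dt (π f) (π g))
    (hB : ∀ f g : K × L × K, doubleExtForm B (π f) (π g) = doubleExtForm B f g)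
    (hadapt : π '' {f : K × L × K | f.2.2 = 0} = {f : K × L × K | f.2.2 = 0}) :
    ∃! t : (L ≃ₗ[K] L) × K × L,
      (∀ a b : L, t.1 ⁅a, b⁆ = ⁅t.1 a, t.1 b⁆) ∧
      (∀ a b : L, B (t.1 a) (t.1 b) = B a b) ∧
      t.2.1 ≠ 0 ∧
      (∀ b : L, t.1.symm (Dt (t.1 b)) = t.2.1 • D b + ⁅t.2.2, b⁆) ∧
      (∀ (u v : K) (a : L),
        π (u, a, v) = (t.2.1 * u + B t.2.2 a - (t.2.1)⁻¹ * ((2 : K)⁻¹ * B t.2.2 t.2.2) * v,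
          t.1 a - ((t.2.1)⁻¹ * v) • t.1 t.2.2, (t.2.1)⁻¹ * v)) := by
  obtain ⟨s, φ, α, e, c, t, rfl⟩ :=
    exists_eq_triangularMap hnd (isLinearMap_of_map_smul_add hlin) hB hadapt
  have hst := triangularMap.mul_eq_one hB
  have hs : s ≠ 0 := left_ne_zero_of_mul_eq_one hst
  have he : Function.Injective e := triangularMap.injective hB hnd
  let e' : L ≃ₗ[K] L := LinearEquiv.ofBijective e ⟨he, triangularMap.surjective hadapt⟩
  let κ : L := e'.symm (-(s • c))
  have hκ : e κ = -(s • c) := e'.apply_symm_apply _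
  have hπ := triangularMap.eq_adaptedMap hB hchar hκ
  refine ⟨(e', s, κ), ⟨triangularMap.map_lie hbr, triangularMap.form_middle hB, hs,
    fun b => e'.symm_apply_eq.2 (triangularMap.map_conj hbr hst hκ b),
    fun u v a => congrFun hπ (u, a, v)⟩, ?_⟩
  rintro ⟨e'', s', κ'⟩ ⟨-, -, -, -, hπ'⟩
  obtain ⟨hee'', hss', hκκ'⟩ :=
    eq_of_adaptedMap_eq he hs (hπ.symm.trans (funext fun f => hπ' f.1 f.2.2 f.2.1))
  exact Prod.ext (LinearEquiv.ext fun a => (congrFun hee'' a).symm)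
    (Prod.ext hss'.symm hκκ'.symm)

theorem data_of_adapted_isomorphism
    {K : Type*} [Field K] (hchar : (2 : K) ≠ 0)
    {L : Type*} [LieRing L] [LieAlgebra K L]
    (B : L →ₗ[K] L →ₗ[K] K)
    (hsym : ∀ a b : L, B a b = B b a)
    (hinv : ∀ a b c : L, B ⁅a, b⁆ c = B a ⁅b, c⁆)
    (hnd : ∀ a : L, (∀ b : L, B a b = 0) → a = 0)
    (D Dt : L →ₗ[K] L)
    (hder : ∀ a b : L, D ⁅a, b⁆ = ⁅D a, b⁆ + ⁅a, D b⁆)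
    (hdert : ∀ a b : L, Dt ⁅a, b⁆ = ⁅Dt a, b⁆ + ⁅a, Dt b⁆)
    (hDinv : ∀ a b : L, B (D a) b + B a (D b) = 0)
    (hDtinv : ∀ a b : L, B (Dt a) b + B a (Dt b) = 0)
    (π : K × L × K → K × L × K)
    (hbij : Function.Bijective π)
    (hlin : ∀ (c : K) (f g : K × L × K), π (c • f + g) = c • π f + π g)
    (hbr : ∀ f g : K × L × K,
      π (doubleExtBracket B D f g) = doubleExtBracket B Dt (π f) (π g))
    (hB : ∀ f g : K × L × K, doubleExtForm B (π f) (π g) = doubleExtForm B f g)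
    (hadapt : π '' {f : K × L × K | f.2.2 = 0} = {f : K × L × K | f.2.2 = 0}) :
    ∃! t : (L ≃ₗ[K] L) × K × L,
      (∀ a b : L, t.1 ⁅a, b⁆ = ⁅t.1 a, t.1 b⁆) ∧
      (∀ a b : L, B (t.1 a) (t.1 b) = B a b) ∧
      t.2.1 ≠ 0 ∧
      (∀ b : L, t.1.symm (Dt (t.1 b)) = t.2.1 • D b + ⁅t.2.2, b⁆) ∧
      (∀ (u v : K) (a : L),
        π (u, a, v) = (t.2.1 * u + B t.2.2 a - (t.2.1)⁻¹ * ((2 : K)⁻¹ * B t.2.2 t.2.2) * v,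
          t.1 a - ((t.2.1)⁻¹ * v) • t.1 t.2.2, (t.2.1)⁻¹ * v)) :=
  data_of_adapted_isomorphism_general hchar B hnd D Dt π hlin hbr hB hadapt
end

section
/- Let K have characteristic 3. Let sq : 𝔞 → 𝔞 be a 3-structure on 𝔞 (⁅sq a, b⁆ = (ad a)³ b, sq (λ • a) = λ³ • sq a, sq (a+b) = sq a + sq b + ⁅b,⁅b,a⁆⁆ + 2•⁅a,⁅b,a⁆⁆). Let D, D̃ be derivations of 𝔞 with B both D- and D̃-invariant, and let 𝔤, 𝔤̃ be the double extensions of (𝔞, B) by D, D̃ on K × 𝔞 × K. Let sq_𝔤 : 𝔤 → 𝔤 be a 3-structure on (𝔤, ⁅·,·⁆_𝔤) (same three axioms for the bracket of 𝔤) with sq_𝔤 (0,a,0) = (𝒫 a, sq a, 0) for all a, sq_𝔤 (0,0,1) = (l, a₀, γ), sq_𝔤 (1,0,0) = (m, b₀, 0), and let sq_𝔤̃ be a 3-structure on 𝔤̃ with corresponding data (𝒫̃, l̃, ã₀, γ̃, m̃, b̃₀). Let π₀ : 𝔞 → 𝔞 be a bijective Lie algebra homomorphism with B (π₀ a)(π₀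 b) = B a b, λ ∈ K nonzero, κ ∈ 𝔞 with π₀⁻¹ ∘ D̃ ∘ π₀ = λ • D + ad κ, and let π (u,a,v) := (λ·u + B κ a − λ⁻¹·ρ·v, π₀ a − (λ⁻¹·v) • π₀ κ, λ⁻¹·v), where ρ := (2 : K)⁻¹ • B κ κ. If π (sq_𝔤 f) = sq_𝔤̃ (π f) for all f ∈ 𝔤, then: m̃ = λ⁻³·(λ·m + B κ b₀); b̃₀ = λ⁻³ • π₀ b₀; γ̃ = λ²·γ; π₀ (sq a) = sq (π₀ a) + (B κ a)³ • b̃₀ for all a ∈ 𝔞; and 𝒫̃ (π₀ a) = λ·𝒫 a + B κ (sq a) − (B κ a)³·m̃ for all a ∈ 𝔞. -/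
section DoubleExtension

variable {K : Type*} [Field K] {L : Type*} [LieRing L] [LieAlgebra K L]
  {B : L →ₗ[K] L →ₗ[K] K} {E : L →ₗ[K] L}

@[simp]
lemma doubleExtBracket_snd_snd (f g : K × L × K) : (doubleExtBracket B E f g).2.2 = 0 := rfl

@[simp]
lemma doubleExtBracket_mk_zero_zero_left (u : K) (g : K × L × K) :
    doubleExtBracket B E (u, 0, 0) g = 0 := by
  simp [doubleExtBracket]

@[simp]
lemma doubleExtBracket_mk_zero_zero_right (f : K × L × K) (u : K) :
    doubleExtBracket B E f (u, 0, 0) = 0 := by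
  simp [doubleExtBracket]

@[simp]
lemma doubleExtBracket_zero_right (f : K × L × K) : doubleExtBracket B E f 0 = 0 :=
  doubleExtBracket_mk_zero_zero_right f 0

variable {sq : K × L × K → K × L × K}

lemma sq_add_mk_zero_zero
    (hadd : ∀ f g, sq (f + g) = sq f + sq g + doubleExtBracket B E g (doubleExtBracket B E g f) +
      (2 : K) • doubleExtBracket B E f (doubleExtBracket B E g f))
    (f : K × L × K) (u : K) : sq (f + (u, 0, 0)) = sq f + sq (u, 0, 0) := by
  simp [hadd]

lemma snd_snd_sq_add
    (hadd : ∀ f g, sq (f + g) = sq f + sq g + doubleExtBracket B E g (doubleExtBracket B E g f) +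
      (2 : K) • doubleExtBracket B E f (doubleExtBracket B E g f))
    (f g : K × L × K) : (sq (f + g)).2.2 = (sq f).2.2 + (sq g).2.2 := by
  simp [hadd]

lemma sq_mk_zero_zero (hsmul : ∀ (c : K) f, sq (c • f) = c ^ 3 • sq f) (u : K) :
    sq (u, 0, 0) = u ^ 3 • sq (1, 0, 0) := by
  rw [← hsmul]
  congr 1
  ext <;> simp

lemma sq_mk_zero
    (hsmul : ∀ (c : K) f, sq (c • f) = c ^ 3 • sq f)
    (hadd : ∀ f g, sq (f + g) = sq f + sq g + doubleExtBracket B E g (doubleExtBracket B E g f) +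
      (2 : K) • doubleExtBracket B E f (doubleExtBracket B E g f))
    (u : K) (a : L) : sq (u, a, 0) = sq (0, a, 0) + u ^ 3 • sq (1, 0, 0) := by
  have hsplit : ((u, a, 0) : K × L × K) = (0, a, 0) + (u, 0, 0) := by ext <;> simp
  rw [hsplit, sq_add_mk_zero_zero hadd, sq_mk_zero_zero hsmul]

lemma snd_snd_sq_mk
    (hsmul : ∀ (c : K) f, sq (c • f) = c ^ 3 • sq f)
    (hadd : ∀ f g, sq (f + g) = sq f + sq g + doubleExtBracket B E g (doubleExtBracket B E g f) +
      (2 : K) • doubleExtBracket B E f (doubleExtBracket B E g f))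
    (u v : K) (a : L) :
    (sq (u, a, v)).2.2 =
      (sq (0, a, 0)).2.2 + u ^ 3 * (sq (1, 0, 0)).2.2 + v ^ 3 * (sq (0, 0, 1)).2.2 := by
  have hsplit : ((u, a, v) : K × L × K) = (0, a, 0) + u • (1, 0, 0) + v • (0, 0, 1) := by
    ext <;> simp
  rw [hsplit, snd_snd_sq_add hadd, snd_snd_sq_add hadd, hsmul, hsmul]
  rfl

end DoubleExtension

theorem adapted_isomorphism_is_three_structure_homomorphism_general
    {K : Type*} [Field K]
    {L : Type*} [LieRing L] [LieAlgebra K L]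
    (B : L →ₗ[K] L →ₗ[K] K)
    -- a 3-structure on 𝔞
    (sq : L → L)
    -- the two derivations
    (Dt : L →ₗ[K] L)
    -- a 3-structure on 𝔤 = double extension by D, with its data
    (sqg : K × L × K → K × L × K)
    (P : L → K) (l γ m : K) (a₀ b₀ : L)
    (hsqg_a : ∀ a : L, sqg ((0 : K), a, (0 : K)) = (P a, sq a, (0 : K)))
    (hsqg_xs : sqg ((0 : K), (0 : L), (1 : K)) = (l, a₀, γ))
    (hsqg_x : sqg ((1 : K), (0 : L), (0 : K)) = (m, b₀, (0 : K)))
    -- a 3-structure on 𝔤̃ = double extension by D̃, with its data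
    (sqgt : K × L × K → K × L × K)
    (hsqgt_smul : ∀ (lam : K) (f : K × L × K), sqgt (lam • f) = lam ^ 3 • sqgt f)
    (hsqgt_add : ∀ f g : K × L × K,
      sqgt (f + g) = sqgt f + sqgt g + doubleExtBracket B Dt g (doubleExtBracket B Dt g f) +
        (2 : K) • doubleExtBracket B Dt f (doubleExtBracket B Dt g f))
    (Pt : L → K) (lt γt mt : K) (a₀t b₀t : L)
    (hsqgt_a : ∀ a : L, sqgt ((0 : K), a, (0 : K)) = (Pt a, sq a, (0 : K)))
    (hsqgt_xs : sqgt ((0 : K), (0 : L), (1 : K)) = (lt, a₀t, γt))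
    (hsqgt_x : sqgt ((1 : K), (0 : L), (0 : K)) = (mt, b₀t, (0 : K)))
    -- the adapted isomorphism data
    (π₀ : L ≃ₗ[K] L)
    (lam : K) (hlam : lam ≠ 0) (κ : L)
    (π : K × L × K → K × L × K)
    (hπ : ∀ (u v : K) (a : L),
      π (u, a, v) = (lam * u + B κ a - lam⁻¹ * ((2 : K)⁻¹ * B κ κ) * v,
        π₀ a - (lam⁻¹ * v) • π₀ κ, lam⁻¹ * v))
    -- π intertwines the 3-structures
    (hcomp : ∀ f : K × L × K, π (sqg f) = sqgt (π f)) :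
    mt = (lam ^ 3)⁻¹ * (lam * m + B κ b₀) ∧
    b₀t = (lam ^ 3)⁻¹ • π₀ b₀ ∧
    γt = lam ^ 2 * γ ∧
    (∀ a : L, π₀ (sq a) = sq (π₀ a) + (B κ a) ^ 3 • b₀t) ∧
    (∀ a : L, Pt (π₀ a) = lam * P a + B κ (sq a) - (B κ a) ^ 3 * mt) := by
  have hπ_mk (u : K) (a : L) : π (u, a, 0) = (lam * u + B κ a, π₀ a, 0) := by
    simpa using hπ u 0 a
  have hsqgt_mk (u : K) (a : L) :
      sqgt (u, a, 0) = (Pt a + u ^ 3 * mt, sq a + u ^ 3 • b₀t, 0) := by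
    rw [sq_mk_zero hsqgt_smul hsqgt_add, hsqgt_a, hsqgt_x]
    simp
  have hx : lam * m + B κ b₀ = lam ^ 3 * mt ∧ π₀ b₀ = lam ^ 3 • b₀t := by
    have h := hcomp (1, 0, 0)
    simp only [hsqg_x, hπ_mk, map_zero, mul_one, add_zero] at h
    rw [sq_mk_zero_zero hsqgt_smul, hsqgt_x] at h
    simpa using h
  have ha (a : L) : lam * P a + B κ (sq a) = Pt (π₀ a) + B κ a ^ 3 * mt ∧
      π₀ (sq a) = sq (π₀ a) + B κ a ^ 3 • b₀t := by
    have h := hcomp (0, a, 0)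
    rw [hsqg_a, hπ_mk, hπ_mk, hsqgt_mk] at h
    simpa using h
  have hγ : lam⁻¹ * γ = lam⁻¹ ^ 3 * γt := by
    have h := congrArg (·.2.2) (hcomp (0, 0, 1))
    simp only [hsqg_xs, hπ, snd_snd_sq_mk hsqgt_smul hsqgt_add, hsqgt_a, hsqgt_x, hsqgt_xs] at h
    simpa using h
  refine ⟨?_, ?_, ?_, fun a => (ha a).2, fun a => ?_⟩
  · field_simp
    linear_combination -hx.1
  · rw [hx.2, smul_smul, inv_mul_cancel₀ (pow_ne_zero 3 hlam), one_smul]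
  · field_simp at hγ
    linear_combination -hγ
  · linear_combination -(ha a).1

theorem adapted_isomorphism_is_three_structure_homomorphism
    {K : Type*} [Field K] [CharP K 3]
    {L : Type*} [LieRing L] [LieAlgebra K L]
    (B : L →ₗ[K] L →ₗ[K] K)
    (hsym : ∀ a b : L, B a b = B b a)
    (hinv : ∀ a b c : L, B ⁅a, b⁆ c = B a ⁅b, c⁆)
    (hnd : ∀ a : L, (∀ b : L, B a b = 0) → a = 0)
    -- a 3-structure on 𝔞
    (sq : L → L)
    (hsq_ad : ∀ a b : L, ⁅sq a, b⁆ = ⁅a, ⁅a, ⁅a, b⁆⁆⁆)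
    (hsq_smul : ∀ (l : K) (a : L), sq (l • a) = l ^ 3 • sq a)
    (hsq_add : ∀ a b : L, sq (a + b) = sq a + sq b + ⁅b, ⁅b, a⁆⁆ + (2 : K) • ⁅a, ⁅b, a⁆⁆)
    -- the two derivations
    (D Dt : L →ₗ[K] L)
    (hder : ∀ a b : L, D ⁅a, b⁆ = ⁅D a, b⁆ + ⁅a, D b⁆)
    (hdert : ∀ a b : L, Dt ⁅a, b⁆ = ⁅Dt a, b⁆ + ⁅a, Dt b⁆)
    (hDinv : ∀ a b : L, B (D a) b + B a (D b) = 0)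
    (hDtinv : ∀ a b : L, B (Dt a) b + B a (Dt b) = 0)
    -- a 3-structure on 𝔤 = double extension by D, with its data
    (sqg : K × L × K → K × L × K)
    (hsqg_ad : ∀ f g : K × L × K,
      doubleExtBracket B D (sqg f) g =
        doubleExtBracket B D f (doubleExtBracket B D f (doubleExtBracket B D f g)))
    (hsqg_smul : ∀ (lam : K) (f : K × L × K), sqg (lam • f) = lam ^ 3 • sqg f)
    (hsqg_add : ∀ f g : K × L × K,
      sqg (f + g) = sqg f + sqg g + doubleExtBracket B D g (doubleExtBracket B D g f) +
        (2 : K) • doubleExtBracket B D f (doubleExtBracket B D g f))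
    (P : L → K) (l γ m : K) (a₀ b₀ : L)
    (hsqg_a : ∀ a : L, sqg ((0 : K), a, (0 : K)) = (P a, sq a, (0 : K)))
    (hsqg_xs : sqg ((0 : K), (0 : L), (1 : K)) = (l, a₀, γ))
    (hsqg_x : sqg ((1 : K), (0 : L), (0 : K)) = (m, b₀, (0 : K)))
    -- a 3-structure on 𝔤̃ = double extension by D̃, with its data
    (sqgt : K × L × K → K × L × K)
    (hsqgt_ad : ∀ f g : K × L × K,
      doubleExtBracket B Dt (sqgt f) g =
        doubleExtBracket B Dt f (doubleExtBracket B Dt f (doubleExtBracket B Dt f g)))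
    (hsqgt_smul : ∀ (lam : K) (f : K × L × K), sqgt (lam • f) = lam ^ 3 • sqgt f)
    (hsqgt_add : ∀ f g : K × L × K,
      sqgt (f + g) = sqgt f + sqgt g + doubleExtBracket B Dt g (doubleExtBracket B Dt g f) +
        (2 : K) • doubleExtBracket B Dt f (doubleExtBracket B Dt g f))
    (Pt : L → K) (lt γt mt : K) (a₀t b₀t : L)
    (hsqgt_a : ∀ a : L, sqgt ((0 : K), a, (0 : K)) = (Pt a, sq a, (0 : K)))
    (hsqgt_xs : sqgt ((0 : K), (0 : L), (1 : K)) = (lt, a₀t, γt))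
    (hsqgt_x : sqgt ((1 : K), (0 : L), (0 : K)) = (mt, b₀t, (0 : K)))
    -- the adapted isomorphism data
    (π₀ : L ≃ₗ[K] L)
    (hπ₀br : ∀ a b : L, π₀ ⁅a, b⁆ = ⁅π₀ a, π₀ b⁆)
    (hπ₀B : ∀ a b : L, B (π₀ a) (π₀ b) = B a b)
    (lam : K) (hlam : lam ≠ 0) (κ : L)
    (hcob : ∀ b : L, π₀.symm (Dt (π₀ b)) = lam • D b + ⁅κ, b⁆)
    (π : K × L × K → K × L × K)
    (hπ : ∀ (u v : K) (a : L),
      π (u, a, v) = (lam * u + B κ a - lam⁻¹ * ((2 : K)⁻¹ * B κ κ) * v,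
        π₀ a - (lam⁻¹ * v) • π₀ κ, lam⁻¹ * v))
    -- π intertwines the 3-structures
    (hcomp : ∀ f : K × L × K, π (sqg f) = sqgt (π f)) :
    mt = (lam ^ 3)⁻¹ * (lam * m + B κ b₀) ∧
    b₀t = (lam ^ 3)⁻¹ • π₀ b₀ ∧
    γt = lam ^ 2 * γ ∧
    (∀ a : L, π₀ (sq a) = sq (π₀ a) + (B κ a) ^ 3 • b₀t) ∧
    (∀ a : L, Pt (π₀ a) = lam * P a + B κ (sq a) - (B κ a) ^ 3 * mt) :=
  adapted_isomorphism_is_three_structure_homomorphism_general B sq Dt sqg P l γ m a₀ b₀ hsqg_a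
    hsqg_xs hsqg_x sqgt hsqgt_smul hsqgt_add Pt lt γt mt a₀t b₀t hsqgt_a hsqgt_xs hsqgt_x π₀ lam
    hlam κ π hπ hcomp
end
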